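/- Let κ be an infinite cardinal number. White has a winning strategy in the cut-and-choose game UG(ℵ0,κ) if, and only if, White has a winning strategy in UG(2,κ). -/

import Mathlib

/-!
White's strategy is fed only Black's moves, and it wins iff against every sequence of Black moves
some point `α` survives every round.

From `UG(ℕ, κ)` to `UG(2, κ)`: embed `2` into `ℕ`, run the `ℕ`-strategy and collapse its answers
back to `2` by a retraction.

From `UG(2, κ)` to `UG(ℕ, κ)`: White runs a winning binary strategy `τ` on fabricated Black moves.
White's function sends `α` to the number of idle moves (keep side `0`, offer the constant `0`) after
which `τ` would first put `α` on side `1`; a cut `v` of Black is relayed as `v` idle moves followed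
by the choice of side `1`. Black's function `h` is relayed through the indicators of its fibres
`h⁻¹{0}, h⁻¹{1}, …` until `τ` picks side `1` of some fibre `h⁻¹{j}`, and `j` is White's cut.
A point surviving the whole fabricated binary play survives the play in `UG(ℕ, κ)`.
-/

open Cardinal Set

namespace GamePaper

universe u

/-! ### Gale–Stewart style games.
A play is a sequence `p : ℕ → M`; player ONE (resp. White) moves at even indices,
player TWO (resp. Black) at odd indices.  A strategy for a player is a function
assigning to the finite sequence of the opponent's prior moves the player's next move. -/

/-- ONE's moves in the play `p` are obtained from the strategy `σ` applied to the
list of TWO's prior moves. -/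
def OneFollows {M : Type*} (σ : List M → M) (p : ℕ → M) : Prop :=
  ∀ n : ℕ, p (2 * n) = σ (List.ofFn fun i : Fin n => p (2 * (i : ℕ) + 1))

/-- TWO's moves in the play `p` are obtained from the strategy `σ` applied to the
list of ONE's prior moves. -/
def TwoFollows {M : Type*} (σ : List M → M) (p : ℕ → M) : Prop :=
  ∀ n : ℕ, p (2 * n + 1) = σ (List.ofFn fun i : Fin (n + 1) => p (2 * (i : ℕ)))

/-- ONE has a winning strategy in the Gale–Stewart game `GS_Λ(A)`. -/
def OneWinsGS {Λ : Type*} (A : Set (ℕ → Λ)) : Prop :=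
  ∃ σ : List Λ → Λ, ∀ p : ℕ → Λ, OneFollows σ p → p ∈ A

/-- TWO has a winning strategy in the Gale–Stewart game `GS_Λ(A)`. -/
def TwoWinsGS {Λ : Type*} (A : Set (ℕ → Λ)) : Prop :=
  ∃ σ : List Λ → Λ, ∀ p : ℕ → Λ, TwoFollows σ p → p ∉ A

/-- ONE has a winning strategy in the multiboard game `GS_Λ(A, K)`:
moves are functions `K → Λ`, and ONE wins a play if on some board `ξ` the induced
play belongs to `A`. -/
def OneWinsGSBoards (Λ K : Type*) (A : Set (ℕ → Λ)) : Prop :=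
  ∃ σ : List (K → Λ) → K → Λ, ∀ q : ℕ → K → Λ, OneFollows σ q →
    ∃ ξ : K, (fun n => q n ξ) ∈ A

/-- TWO has a winning strategy in the multiboard game `GS_Λ(A, K)`. -/
def TwoWinsGSBoards (Λ K : Type*) (A : Set (ℕ → Λ)) : Prop :=
  ∃ σ : List (K → Λ) → K → Λ, ∀ q : ℕ → K → Λ, TwoFollows σ q →
    ∀ ξ : K, (fun n => q n ξ) ∉ A

/-- The multiboard Gale–Stewart game `GS_Λ(A, K)` is determined. -/
def GSBoardsDetermined (Λ K : Type*) (A : Set (ℕ → Λ)) : Prop :=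
  OneWinsGSBoards Λ K A ∨ TwoWinsGSBoards Λ K A

/-- `D(λ, κ)` : every multiboard Gale–Stewart game on `κ` boards with moves in `λ`
is determined. -/
def DProp (Λ K : Type*) : Prop :=
  ∀ A : Set (ℕ → Λ), GSBoardsDetermined Λ K A

/-! ### Laver games -/

/-- ONE wins the play `q` of the Laver game `LG(Λ, K)`. -/
def LaverWin (Λ K : Type*) (q : ℕ → K → Λ) : Prop :=
  ∀ S : Set (ℕ → Λ), ¬ TwoWinsGS S → ∃ ξ : K, (fun n => q n ξ) ∈ S

/-- `L(λ, κ)` : ONE has a winning strategy in the Laver game `LG(Λ, K)`. -/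
def OneWinsLG (Λ K : Type*) : Prop :=
  ∃ σ : List (K → Λ) → K → Λ, ∀ q : ℕ → K → Λ, OneFollows σ q → LaverWin Λ K q

/-- TWO has a winning strategy in the Laver game `LG(Λ, K)`. -/
def TwoWinsLG (Λ K : Type*) : Prop :=
  ∃ σ : List (K → Λ) → K → Λ, ∀ q : ℕ → K → Λ, TwoFollows σ q → ¬ LaverWin Λ K q

/-! ### Ulam's cut-and-choose games `UG(λ, κ)`.
White first chooses `f 0 : K → Λ`; thereafter Black chooses `(ξ (2n), f (2n+1))` and
White responds with `(ξ (2n+1), f (2n+2))`.  White wins iff for some `α : K`,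
`f n α = ξ n` for all `n`. -/

/-- A strategy for White in `UG(Λ, K)`: a first move, and a response to each finite
sequence of Black's prior moves. -/
structure UGWhiteStrategy (Λ K : Type*) where
  first : K → Λ
  move : List (Λ × (K → Λ)) → Λ × (K → Λ)

/-- White's moves in the play `(ξ, f)` of `UG(Λ, K)` follow the strategy `σ`. -/
def UGWhiteFollows {Λ K : Type*} (σ : UGWhiteStrategy Λ K) (ξ : ℕ → Λ) (f : ℕ → K → Λ) :
    Prop :=
  f 0 = σ.first ∧
  ∀ n : ℕ, (ξ (2 * n + 1), f (2 * n + 2)) =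
    σ.move (List.ofFn fun i : Fin (n + 1) => (ξ (2 * (i : ℕ)), f (2 * (i : ℕ) + 1)))

/-- `U(λ, κ)` : White has a winning strategy in the cut-and-choose game `UG(Λ, K)`. -/
def WhiteWinsUG (Λ K : Type*) : Prop :=
  ∃ σ : UGWhiteStrategy Λ K, ∀ (ξ : ℕ → Λ) (f : ℕ → K → Λ),
    UGWhiteFollows σ ξ f → ∃ α : K, ∀ n : ℕ, f n α = ξ n

/-! ### Ideals and the game `G(J)` -/

/-- `J` is an ideal of subsets: nonempty, closed under binary unions and subsets. -/
def IsIdeal {S : Type*} (J : Set (Set S)) : Prop :=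
  J.Nonempty ∧ (∀ A B : Set S, A ∈ J → B ∈ J → A ∪ B ∈ J) ∧
    ∀ A B : Set S, B ∈ J → A ⊆ B → A ∈ J

/-- `J` is atomless: every `J`-positive set splits into two disjoint `J`-positive sets. -/
def IsAtomless {S : Type*} (J : Set (Set S)) : Prop :=
  ∀ X : Set S, X ∉ J → ∃ A B : Set S, A ∪ B = X ∧ Disjoint A B ∧ A ∉ J ∧ B ∉ J

/-- Legality of White's `n`-th move in the game `G(J)` (White plays `W n`,
Black plays `B n`). -/
def GJWhiteLegal {S : Type*} (J : Set (Set S)) (W B : ℕ → Set S) : ℕ → Prop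
  | 0 => W 0 ∉ J
  | n + 1 => W (n + 1) ∉ J ∧ W (n + 1) ⊆ B n

/-- Legality of Black's `n`-th move in the game `G(J)`. -/
def GJBlackLegal {S : Type*} (J : Set (Set S)) (W B : ℕ → Set S) (n : ℕ) : Prop :=
  B n ∉ J ∧ B n ⊆ W n

/-- Black has a winning strategy in the game `G(J)`: a strategy `τ` such that in any
play in which Black follows `τ`, Black's moves are legal as long as White's have been,
and if White always moves legally then `⋂ n, B n` is nonempty. -/
def BlackWinsGJ {S : Type*} (J : Set (Set S)) : Prop :=
  ∃ τ : List (Set S) → Set S,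
    ∀ W B : ℕ → Set S,
      (∀ n : ℕ, B n = τ (List.ofFn fun i : Fin (n + 1) => W (i : ℕ))) →
      (∀ n : ℕ, (∀ k ≤ n, GJWhiteLegal J W B k) → GJBlackLegal J W B n) ∧
      ((∀ n : ℕ, GJWhiteLegal J W B n) → (⋂ n, B n).Nonempty)

/-- The ideal `J` on `K` witnesses `I(λ, κ)`: it is a proper free ideal, `λ⁺`-complete,
every positive set has a partition into `λ` many disjoint positive sets, and there is a
dense family in `J⁺` closed under countable descending intersections (nonempty). -/
def IdealWitness (Λ K : Type*) (J : Set (Set K)) : Prop :=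
  IsIdeal J ∧ J ≠ Set.univ ∧ ⋃₀ J = Set.univ ∧
  (∀ A : Λ → Set K, (∀ i, A i ∈ J) → (⋃ i, A i) ∈ J) ∧
  (∀ X : Set K, X ∉ J → ∃ P : Λ → Set K, (⋃ i, P i) = X ∧
      (∀ i j : Λ, i ≠ j → Disjoint (P i) (P j)) ∧ ∀ i, P i ∉ J) ∧
  ∃ F : Set (Set K), (∀ Y ∈ F, Y ∉ J) ∧ (∀ X : Set K, X ∉ J → ∃ Y ∈ F, Y ⊆ X) ∧
    ∀ Xs : ℕ → Set K, (∀ n, Xs n ∈ F) → (∀ n, Xs (n + 1) ⊆ Xs n) → (⋂ n, Xs n).Nonempty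

/-- `I(λ, κ)` : some ideal on `K` witnesses the above. -/
def IProp (Λ K : Type*) : Prop := ∃ J : Set (Set K), IdealWitness Λ K J

/-! ### The Banach–Mazur game and box products -/

/-- Legality of White's `n`-th move in the Banach–Mazur game (White plays the sets of
even index of the play `p`). -/
def BMWhiteLegal {X : Type*} [TopologicalSpace X] (p : ℕ → Set X) : ℕ → Prop
  | 0 => IsOpen (p 0) ∧ (p 0).Nonempty
  | n + 1 => IsOpen (p (2 * n + 2)) ∧ (p (2 * n + 2)).Nonempty ∧ p (2 * n + 2) ⊆ p (2 * n + 1)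

/-- Legality of Black's `n`-th move in the Banach–Mazur game. -/
def BMBlackLegal {X : Type*} [TopologicalSpace X] (p : ℕ → Set X) (n : ℕ) : Prop :=
  IsOpen (p (2 * n + 1)) ∧ (p (2 * n + 1)).Nonempty ∧ p (2 * n + 1) ⊆ p (2 * n)

/-- Black has a winning strategy in the Banach–Mazur game `BM(X)`: a strategy `τ` such
that in any play where Black follows `τ`, Black's moves are legal as long as White's
have been, and if White always moves legally then the intersection of the play is
nonempty. -/
def BlackWinsBM (X : Type*) [TopologicalSpace X] : Prop :=
  ∃ τ : List (Set X) → Set X,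
    ∀ p : ℕ → Set X,
      (∀ n : ℕ, p (2 * n + 1) = τ (List.ofFn fun i : Fin (n + 1) => p (2 * (i : ℕ)))) →
      (∀ n : ℕ, (∀ k ≤ n, BMWhiteLegal p k) → BMBlackLegal p n) ∧
      ((∀ n : ℕ, BMWhiteLegal p n) → (⋂ n, p n).Nonempty)

/-- The box product topology on `ι → X`: generated by boxes `∏ i, U i` with all
`U i` open. -/
def boxTopology (ι X : Type*) [TopologicalSpace X] : TopologicalSpace (ι → X) :=
  TopologicalSpace.generateFrom
    {S : Set (ι → X) | ∃ U : ι → Set X, (∀ i, IsOpen (U i)) ∧ S = Set.pi Set.univ U}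

/-- `𝓑` is a π-base for `X`: a family of nonempty open sets such that every nonempty
open set contains a member of the family. -/
def IsPiBase (X : Type*) [TopologicalSpace X] (𝓑 : Set (Set X)) : Prop :=
  (∀ V ∈ 𝓑, IsOpen V ∧ V.Nonempty) ∧
    ∀ U : Set X, IsOpen U → U.Nonempty → ∃ V ∈ 𝓑, V ⊆ U

/-! ### Interlaced sets -/

/-- `A` and `B` are interlaced: both are infinite and for some `k` the increasing
enumerations of `A \ k` and `B \ k` satisfy `a₀ < b₀ < a₁ < b₁ < ⋯`. -/
def Interlaced (A B : Set ℕ) : Prop :=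
  A.Infinite ∧ B.Infinite ∧ ∃ k : ℕ, ∀ n : ℕ,
    Nat.nth (fun m => m ∈ A ∧ k ≤ m) n < Nat.nth (fun m => m ∈ B ∧ k ≤ m) n ∧
    Nat.nth (fun m => m ∈ B ∧ k ≤ m) n < Nat.nth (fun m => m ∈ A ∧ k ≤ m) (n + 1)

/-- `B(x) = {x(2n) + x(2n+1) : n < ω, x(2n) > 0}`. -/
def Bx (x : ℕ → ℕ) : Set ℕ :=
  {m | ∃ n : ℕ, 0 < x (2 * n) ∧ m = x (2 * n) + x (2 * n + 1)}

/-- `Y(𝓑) = {x ∈ ωω : B(x) ∉ 𝓑}`. -/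
def YFam (𝓑 : Set (Set ℕ)) : Set (ℕ → ℕ) := {x | Bx x ∉ 𝓑}

/-- `B^F_i = {F(2n)(i) + F(2n+1)(i) : n < ω, F(2n)(i) > 0}` for a play `F` of `G^ω`. -/
def BF (F : ℕ → ℕ → ℕ) (i : ℕ) : Set ℕ :=
  {m | ∃ n : ℕ, 0 < F (2 * n) i ∧ m = F (2 * n) i + F (2 * n + 1) i}

/-- `D(A,B)` : `A` or `B` is finite, or for each `k` there are `a₁ < a₂ < a₃` in `A \ k`
with no element of `B` strictly between `a₁` and `a₃`. -/
def DRel (A B : Set ℕ) : Prop :=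
  A.Finite ∨ B.Finite ∨ ∀ k : ℕ, ∃ a₁ a₂ a₃ : ℕ,
    a₁ ∈ A ∧ a₂ ∈ A ∧ a₃ ∈ A ∧ k ≤ a₁ ∧ a₁ < a₂ ∧ a₂ < a₃ ∧
    ¬ ∃ b ∈ B, a₁ < b ∧ b < a₃


section Strategies

variable {β Λ Λ' K : Type*}

def seqPrefix (b : ℕ → β) (n : ℕ) : List β := List.ofFn fun i : Fin n => b i

@[simp] lemma seqPrefix_zero (b : ℕ → β) : seqPrefix b 0 = [] := rfl

lemma seqPrefix_succ (b : ℕ → β) (n : ℕ) : seqPrefix b (n + 1) = seqPrefix b n ++ [b n] :=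
  List.ofFn_succ_last

@[simp] lemma length_seqPrefix (b : ℕ → β) (n : ℕ) : (seqPrefix b n).length = n :=
  List.length_ofFn

lemma map_seqPrefix (g : β → Λ) (b : ℕ → β) (n : ℕ) :
    (seqPrefix b n).map g = seqPrefix (g ∘ b) n :=
  List.map_ofFn

lemma exists_seqPrefix_of_chain {L : ℕ → List β} (hL : ∀ m, L m <+: L (m + 1))
    (hlen : ∀ n, ∃ m, n < (L m).length) : ∃ b : ℕ → β, ∀ m, L m = seqPrefix b (L m).length := by
  choose M hM using hlen
  have prefix_of_le : ∀ {m m' : ℕ}, m ≤ m' → L m <+: L m' := by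
    intro m m' h
    induction h with
    | refl => exact List.prefix_refl _
    | step _ ih => exact ih.trans (hL _)
  refine ⟨fun t => (L (M t))[t]'(hM t), fun m => List.ext_getElem (by simp) fun t ht _ => ?_⟩
  simp only [seqPrefix, List.getElem_ofFn]
  rw [(prefix_of_le (le_max_left m (M t))).getElem ht,
    (prefix_of_le (le_max_right m (M t))).getElem (hM t)]

def interleave (x y : ℕ → β) (m : ℕ) : β := if m % 2 = 0 then x (m / 2) else y (m / 2)

@[simp] lemma interleave_two_mul (x y : ℕ → β) (n : ℕ) : interleave x y (2 * n) = x n := by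
  simp [interleave]

@[simp] lemma interleave_two_mul_add_one (x y : ℕ → β) (n : ℕ) :
    interleave x y (2 * n + 1) = y n := by
  simp [interleave, Nat.add_mod, Nat.add_div]

def blackMoves (ξ : ℕ → Λ) (f : ℕ → K → Λ) (k : ℕ) : Λ × (K → Λ) := (ξ (2 * k), f (2 * k + 1))

namespace UGWhiteStrategy

def pending (σ : UGWhiteStrategy Λ K) : List (Λ × (K → Λ)) → K → Λ
  | [] => σ.first
  | a :: l => (σ.move (a :: l)).2

lemma pending_append_singleton (σ : UGWhiteStrategy Λ K) (l : List (Λ × (K → Λ)))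
    (a : Λ × (K → Λ)) : σ.pending (l ++ [a]) = (σ.move (l ++ [a])).2 := by
  cases l <;> rfl

end UGWhiteStrategy

lemma UGWhiteFollows.apply_two_mul {σ : UGWhiteStrategy Λ K} {ξ : ℕ → Λ} {f : ℕ → K → Λ}
    (h : UGWhiteFollows σ ξ f) (n : ℕ) : f (2 * n) = σ.pending (seqPrefix (blackMoves ξ f) n) := by
  cases n with
  | zero => exact h.1
  | succ n =>
    rw [seqPrefix_succ, UGWhiteStrategy.pending_append_singleton, ← seqPrefix_succ]
    exact congrArg Prod.snd (h.2 n)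

lemma UGWhiteFollows.apply_two_mul_add_one {σ : UGWhiteStrategy Λ K} {ξ : ℕ → Λ} {f : ℕ → K → Λ}
    (h : UGWhiteFollows σ ξ f) (n : ℕ) :
    ξ (2 * n + 1) = (σ.move (seqPrefix (blackMoves ξ f) (n + 1))).1 :=
  congrArg Prod.fst (h.2 n)

namespace UGWhiteStrategy

def SurvivesMove (σ : UGWhiteStrategy Λ K) (l : List (Λ × (K → Λ))) (a : Λ × (K → Λ))
    (α : K) : Prop :=
  σ.pending l α = a.1 ∧ a.2 α = (σ.move (l ++ [a])).1

def Survives (σ : UGWhiteStrategy Λ K) (l : List (Λ × (K → Λ))) (α : K) : Prop :=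
  ∀ l₁ a l₂, l = l₁ ++ a :: l₂ → σ.SurvivesMove l₁ a α

def IsWinning (σ : UGWhiteStrategy Λ K) : Prop :=
  ∀ (ξ : ℕ → Λ) (f : ℕ → K → Λ), UGWhiteFollows σ ξ f → ∃ α : K, ∀ n : ℕ, f n α = ξ n

variable {σ : UGWhiteStrategy Λ K}

lemma survives_nil (α : K) : σ.Survives [] α := by
  intro l₁ a l₂ h
  simp at h

lemma survives_append_singleton {l : List (Λ × (K → Λ))} {a : Λ × (K → Λ)} {α : K} :
    σ.Survives (l ++ [a]) α ↔ σ.Survives l α ∧ σ.SurvivesMove l a α := by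
  refine ⟨fun h => ⟨fun l₁ c l₂ hl => h l₁ c (l₂ ++ [a]) (by simp [hl]), h l a [] rfl⟩, ?_⟩
  rintro ⟨hl, ha⟩ l₁ c l₂ heq
  rcases List.eq_nil_or_concat l₂ with rfl | ⟨l₂', d, rfl⟩
  · obtain ⟨rfl, hc⟩ := List.append_inj' heq rfl
    cases hc
    exact ha
  · rw [show l₁ ++ c :: l₂'.concat d = (l₁ ++ c :: l₂') ++ [d] by simp] at heq
    exact hl l₁ c l₂' (List.append_inj' heq rfl).1

lemma Survives.of_prefix {l₁ l₂ : List (Λ × (K → Λ))} {α : K} (h : l₁ <+: l₂)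
    (hs : σ.Survives l₂ α) : σ.Survives l₁ α := by
  obtain ⟨r, rfl⟩ := h
  rintro m₁ a m₂ rfl
  exact hs m₁ a (m₂ ++ r) (by simp)

lemma survives_seqPrefix {b : ℕ → Λ × (K → Λ)} {α : K}
    (h : ∀ n, σ.SurvivesMove (seqPrefix b n) (b n) α) (n : ℕ) : σ.Survives (seqPrefix b n) α := by
  induction n with
  | zero => exact survives_nil α
  | succ n ih => exact seqPrefix_succ b n ▸ survives_append_singleton.2 ⟨ih, h n⟩

lemma exists_follows (σ : UGWhiteStrategy Λ K) (b : ℕ → Λ × (K → Λ)) :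
    ∃ ξ f, UGWhiteFollows σ ξ f ∧ blackMoves ξ f = b := by
  set ξ := interleave (fun n => (b n).1) (fun n => (σ.move (seqPrefix b (n + 1))).1)
  set f := interleave (fun n => σ.pending (seqPrefix b n)) (fun n => (b n).2)
  have hb : blackMoves ξ f = b := by
    funext k
    simp [ξ, f, blackMoves]
  refine ⟨ξ, f, ⟨interleave_two_mul _ _ 0, fun n => ?_⟩, hb⟩
  change _ = σ.move (seqPrefix (blackMoves ξ f) (n + 1))
  rw [hb, show 2 * n + 2 = 2 * (n + 1) by ring]
  simp only [ξ, f, interleave_two_mul, interleave_two_mul_add_one, seqPrefix_succ,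
    pending_append_singleton]

theorem isWinning_iff :
    σ.IsWinning ↔ ∀ b : ℕ → Λ × (K → Λ), ∃ α, ∀ n, σ.SurvivesMove (seqPrefix b n) (b n) α := by
  constructor
  · intro hσ b
    obtain ⟨ξ, f, hf, rfl⟩ := exists_follows σ b
    obtain ⟨α, hα⟩ := hσ ξ f hf
    refine ⟨α, fun n => ⟨?_, ?_⟩⟩
    · rw [← hf.apply_two_mul]
      exact hα (2 * n)
    · rw [← seqPrefix_succ, ← hf.apply_two_mul_add_one]
      exact hα (2 * n + 1)
  · intro hσ ξ f hf
    obtain ⟨α, hα⟩ := hσ (blackMoves ξ f)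
    refine ⟨α, fun m => ?_⟩
    obtain ⟨n, rfl | rfl⟩ := Nat.even_or_odd' m
    · rw [hf.apply_two_mul]
      exact (hα n).1
    · rw [hf.apply_two_mul_add_one, seqPrefix_succ]
      exact (hα n).2

lemma IsWinning.exists_survives_chain (hσ : σ.IsWinning) {L : ℕ → List (Λ × (K → Λ))}
    (hL : ∀ m, L m <+: L (m + 1)) (hlen : ∀ n, ∃ m, n < (L m).length) :
    ∃ α, ∀ m, σ.Survives (L m) α := by
  obtain ⟨b, hb⟩ := exists_seqPrefix_of_chain hL hlen
  obtain ⟨α, hα⟩ := isWinning_iff.1 hσ b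
  exact ⟨α, fun m => hb m ▸ survives_seqPrefix hα _⟩

def retract (σ : UGWhiteStrategy Λ K) (r : Λ → Λ') (e : Λ' → Λ) : UGWhiteStrategy Λ' K where
  first := r ∘ σ.first
  move L := Prod.map r (r ∘ ·) (σ.move (L.map (Prod.map e (e ∘ ·))))

lemma pending_retract (σ : UGWhiteStrategy Λ K) (r : Λ → Λ') (e : Λ' → Λ)
    (l : List (Λ' × (K → Λ'))) :
    (σ.retract r e).pending l = r ∘ σ.pending (l.map (Prod.map e (e ∘ ·))) := by
  cases l <;> rfl

theorem IsWinning.retract (hσ : σ.IsWinning) {r : Λ → Λ'} {e : Λ' → Λ}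
    (h : Function.LeftInverse r e) : (σ.retract r e).IsWinning := by
  rw [isWinning_iff] at hσ ⊢
  intro b
  obtain ⟨α, hα⟩ := hσ (Prod.map e (e ∘ ·) ∘ b)
  refine ⟨α, fun n => ⟨?_, ?_⟩⟩
  · rw [pending_retract, map_seqPrefix, Function.comp_apply, (hα n).1]
    exact h _
  · change _ = r (σ.move ((seqPrefix b n ++ [b n]).map (Prod.map e (e ∘ ·)))).1
    rw [List.map_append, map_seqPrefix, List.map_singleton]
    exact (h _).symm.trans (congrArg r (hα n).2)

end UGWhiteStrategy

theorem WhiteWinsUG.of_leftInverse {r : Λ → Λ'} {e : Λ' → Λ} (h : Function.LeftInverse r e) :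
    WhiteWinsUG Λ K → WhiteWinsUG Λ' K :=
  fun ⟨σ, hσ⟩ => ⟨σ.retract r e, UGWhiteStrategy.IsWinning.retract hσ h⟩

end Strategies

section BinaryToNat

variable {K : Type*} (τ : UGWhiteStrategy (Fin 2) K)

open UGWhiteStrategy

def idleMove : Fin 2 × (K → Fin 2) := (0, fun _ => 0)

def cutMoves (v : ℕ) : List (Fin 2 × (K → Fin 2)) :=
  List.replicate v idleMove ++ [(1, fun _ => 0)]

def fiberInd (h : K → ℕ) (j : ℕ) : K → Fin 2 := fun α => if h α = j then 1 else 0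

def fiberMoves (h : K → ℕ) (n : ℕ) : List (Fin 2 × (K → Fin 2)) :=
  (List.range n).map fun j => (0, fiberInd h j)

open Classical in
noncomputable def encodedFun (l : List (Fin 2 × (K → Fin 2))) : K → ℕ := fun α =>
  if h : ∃ i, τ.pending (l ++ List.replicate i idleMove) α = 1 then Nat.find h else 0

open Classical in
noncomputable def fiberIndex (l : List (Fin 2 × (K → Fin 2))) (h : K → ℕ) : ℕ :=
  if hj : ∃ j, (τ.move (l ++ fiberMoves h (j + 1))).1 = 1 then Nat.find hj else 0

noncomputable def simulateRound (l : List (Fin 2 × (K → Fin 2))) (a : ℕ × (K → ℕ)) :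
    List (Fin 2 × (K → Fin 2)) :=
  l ++ cutMoves a.1 ++ fiberMoves a.2 (fiberIndex τ (l ++ cutMoves a.1) a.2 + 1)

noncomputable def simulate (L : List (ℕ × (K → ℕ))) : List (Fin 2 × (K → Fin 2)) :=
  L.foldl (simulateRound τ) []

noncomputable def natStrategy : UGWhiteStrategy ℕ K where
  first := encodedFun τ []
  move L := (fiberIndex τ (simulate τ L.dropLast ++ cutMoves (L.getLastD default).1)
    (L.getLastD default).2, encodedFun τ (simulate τ L))

lemma simulate_append_singleton (l : List (ℕ × (K → ℕ))) (a : ℕ × (K → ℕ)) :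
    simulate τ (l ++ [a]) = simulateRound τ (simulate τ l) a :=
  List.foldl_concat ..

lemma length_lt_length_simulateRound (l : List (Fin 2 × (K → Fin 2))) (a : ℕ × (K → ℕ)) :
    l.length < (simulateRound τ l a).length := by
  simp [simulateRound, cutMoves]

lemma pending_natStrategy (l : List (ℕ × (K → ℕ))) :
    (natStrategy τ).pending l = encodedFun τ (simulate τ l) := by
  cases l <;> rfl

lemma natStrategy_move_append_singleton_fst (l : List (ℕ × (K → ℕ))) (a : ℕ × (K → ℕ)) :
    ((natStrategy τ).move (l ++ [a])).1 = fiberIndex τ (simulate τ l ++ cutMoves a.1) a.2 := by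
  simp [natStrategy]

variable {τ}

lemma encodedFun_eq_of_survives {l : List (Fin 2 × (K → Fin 2))} {v : ℕ} {α : K}
    (hs : τ.Survives (l ++ cutMoves v) α) : encodedFun τ l α = v := by
  have pending_eq : ∀ i ≤ v,
      τ.pending (l ++ List.replicate i idleMove) α = if i = v then 1 else 0 := by
    intro i hi
    have hpre : (l ++ List.replicate i idleMove) ++ [if i = v then (1, fun _ => 0) else idleMove]
        <+: l ++ cutMoves v := by
      rcases hi.lt_or_eq with hi | rfl
      · obtain ⟨k, rfl⟩ := Nat.exists_eq_add_of_lt hi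
        exact ⟨List.replicate k idleMove ++ [(1, fun _ => 0)], by
          rw [if_neg (by omega), cutMoves, add_assoc, List.replicate_add, List.replicate_succ]
          simp⟩
      · simp [cutMoves]
    have := (survives_append_singleton.1 (hs.of_prefix hpre)).2.1
    split_ifs at this ⊢ <;> exact this
  have hv : τ.pending (l ++ List.replicate v idleMove) α = 1 := by simpa using pending_eq v le_rfl
  rw [encodedFun, dif_pos ⟨v, hv⟩, Nat.find_eq_iff]
  refine ⟨hv, fun i hi => ?_⟩
  rw [pending_eq i hi.le, if_neg hi.ne]
  decide

lemma fiberInd_eq_of_survives {l : List (Fin 2 × (K → Fin 2))} {h : K → ℕ} {j : ℕ} {α : K}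
    (hs : τ.Survives (l ++ fiberMoves h (j + 1)) α) :
    fiberInd h j α = (τ.move (l ++ fiberMoves h (j + 1))).1 := by
  rw [fiberMoves, List.range_succ, List.map_append, List.map_singleton, ← List.append_assoc]
    at hs ⊢
  exact (survives_append_singleton.1 hs).2.2

lemma apply_eq_of_fiberInd_eq_one {h : K → ℕ} {j : ℕ} {α : K} (hα : fiberInd h j α = 1) :
    h α = j := by
  by_contra hne
  simp [fiberInd, hne] at hα

lemma UGWhiteStrategy.IsWinning.move_fiberIndex (hτ : τ.IsWinning)
    (l : List (Fin 2 × (K → Fin 2))) (h : K → ℕ) :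
    (τ.move (l ++ fiberMoves h (fiberIndex τ l h + 1))).1 = 1 := by
  have hex : ∃ j, (τ.move (l ++ fiberMoves h (j + 1))).1 = 1 := by
    -- otherwise a point surviving all fibre moves would lie in no fibre
    by_contra! hno
    obtain ⟨α, hα⟩ := hτ.exists_survives_chain (L := fun j => l ++ fiberMoves h j)
      (fun j => by simp [fiberMoves, List.range_succ])
      (fun n => ⟨n + 1, by simp [fiberMoves]; omega⟩)
    apply hno (h α)
    rw [← fiberInd_eq_of_survives (hα (h α + 1))]
    simp [fiberInd]
  rw [fiberIndex, dif_pos hex]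
  exact Nat.find_spec hex

lemma UGWhiteStrategy.IsWinning.survivesMove_natStrategy (hτ : τ.IsWinning)
    {l : List (ℕ × (K → ℕ))} {a : ℕ × (K → ℕ)} {α : K}
    (hs : τ.Survives (simulateRound τ (simulate τ l) a) α) :
    (natStrategy τ).SurvivesMove l a α := by
  have hcut : τ.Survives (simulate τ l ++ cutMoves a.1) α := hs.of_prefix (List.prefix_append _ _)
  refine ⟨by rw [pending_natStrategy]; exact encodedFun_eq_of_survives hcut, ?_⟩
  rw [natStrategy_move_append_singleton_fst]
  apply apply_eq_of_fiberInd_eq_one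
  rw [fiberInd_eq_of_survives hs]
  exact hτ.move_fiberIndex _ _

theorem UGWhiteStrategy.IsWinning.natStrategy (hτ : τ.IsWinning) : (natStrategy τ).IsWinning := by
  rw [isWinning_iff]
  intro b
  have hround : ∀ m, simulate τ (seqPrefix b (m + 1)) =
      simulateRound τ (simulate τ (seqPrefix b m)) (b m) :=
    fun m => by rw [seqPrefix_succ, simulate_append_singleton]
  have hlen : ∀ m, m ≤ (simulate τ (seqPrefix b m)).length := by
    intro m
    induction m with
    | zero => exact Nat.zero_le _
    | succ m ih => rw [hround]; exact ih.trans_lt (length_lt_length_simulateRound τ _ _)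
  obtain ⟨α, hα⟩ := hτ.exists_survives_chain (L := fun m => simulate τ (seqPrefix b m))
    (fun m => by rw [hround, simulateRound, List.append_assoc]; exact List.prefix_append _ _)
    (fun n => ⟨n + 1, hlen (n + 1)⟩)
  exact ⟨α, fun n => hτ.survivesMove_natStrategy (hround n ▸ hα (n + 1))⟩

end BinaryToNat

theorem statement_8_general (K : Type u) :
    WhiteWinsUG ℕ K ↔ WhiteWinsUG (Fin 2) K :=
  ⟨WhiteWinsUG.of_leftInverse (r := Fin.ofNat 2) Fin.cast_val_eq_self,
    fun ⟨τ, hτ⟩ => ⟨natStrategy τ, UGWhiteStrategy.IsWinning.natStrategy hτ⟩⟩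

/-- Theorem (paper Thm 13): for an infinite cardinal `κ`, White has a winning strategy
in `UG(ℵ₀,κ)` iff White has a winning strategy in `UG(2,κ)`. -/
theorem statement_8 (K : Type u) [Infinite K] :
    WhiteWinsUG ℕ K ↔ WhiteWinsUG (Fin 2) K :=
  statement_8_general K

end GamePaper
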